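/- arXiv:1810.03162 — 3 statements merged into one kernel-verified Lean document; each statement's English description precedes it below -/
import Mathlib

section
/- If the cost x(L) = (1/(n·C))·[exp(ln(1+n·C·α)/cap · L) − 1] of an edge satisfies x(L) < b for some benefit b with 1 ≤ b ≤ α, then the load L is strictly less than the capacity cap. -/
open Real

noncomputable def covceCost (n C α cap L : ℝ) : ℝ :=
  1 / (n * C) * (exp (log (1 + n * C * α) / cap * L) - 1)

lemma covceCost_cap {n C α cap : ℝ} (hnC : n * C ≠ 0) (hpos : 0 < 1 + n * C * α)
    (hcap : cap ≠ 0) : covceCost n C α cap cap = α := by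
  rw [covceCost, div_mul_cancel₀ _ hcap, exp_log hpos, add_sub_cancel_left, one_div,
    inv_mul_cancel_left₀ hnC]

lemma covceCost_strictMono {n C α cap : ℝ} (hnC : 0 < n * C) (hα : 0 < α) (hcap : 0 < cap) :
    StrictMono (covceCost n C α cap) := by
  have hrate : 0 < log (1 + n * C * α) / cap :=
    div_pos (log_pos (lt_add_of_pos_right 1 (mul_pos hnC hα))) hcap
  intro L L' hLL'
  unfold covceCost
  gcongr

theorem covce_cost_lt_benefit_implies_load_lt_cap_general (n C α cap L b : ℝ)
    (hn : 1 ≤ n) (hC : 1 ≤ C) (hα : 1 ≤ α) (hcap : 0 < cap)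
    (hbα : b ≤ α)
    (hx : (1 / (n * C)) * (Real.exp ((Real.log (1 + n * C * α) / cap) * L) - 1) < b) :
    L < cap := by
  have hnC : 0 < n * C := mul_pos (by linarith) (by linarith)
  have hα₀ : 0 < α := by linarith
  have hfull : covceCost n C α cap cap = α :=
    covceCost_cap hnC.ne' (by nlinarith) hcap.ne'
  exact (covceCost_strictMono hnC hα₀ hcap).lt_iff_lt.mp (hx.trans_le (hbα.trans_eq hfull.symm))

/-- If the cost x(L) of an edge satisfies x(L) < b for some benefit b with 1 ≤ b ≤ α,
then the load L is strictly less than the capacity cap. -/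
theorem covce_cost_lt_benefit_implies_load_lt_cap (n C α cap L b : ℝ)
    (hn : 1 ≤ n) (hC : 1 ≤ C) (hα : 1 ≤ α) (hcap : 0 < cap) (hL : 0 ≤ L)
    (hb1 : 1 ≤ b) (hbα : b ≤ α)
    (hx : (1 / (n * C)) * (Real.exp ((Real.log (1 + n * C * α) / cap) * L) - 1) < b) :
    L < cap :=
  covce_cost_lt_benefit_implies_load_lt_cap_general n C α cap L b hn hC hα hcap hbα hx
end

section
/- For the cost function x(L) = (1/(n·C))·[exp(ln(1+n·C·α)/cap · L) − 1], if the load L is at least the capacity cap, then x(L) ≥ α; consequently, since every benefit b satisfies b ≤ α, the COVCE acceptance condition cost < b can never hold for an embedding using such a resource. -/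
/-! Once the load reaches capacity the exponent `log (1 + k α) · L / cap` is at least
`log (1 + k α)`, so the exponential is at least `1 + k α` and the cost at least `α`. -/

open Real

/-- The paper's cost function `x(L)`, with `k = n C`. -/
noncomputable def expCost (k α cap L : ℝ) : ℝ :=
  (1 / k) * (exp ((log (1 + k * α) / cap) * L) - 1)

theorem le_exp_log_div_mul {a cap L : ℝ} (ha : 1 ≤ a) (hcap : 0 < cap) (hL : cap ≤ L) :
    a ≤ exp ((log a / cap) * L) := by
  have hlog : log a ≤ (log a / cap) * L := by
    rw [div_mul_eq_mul_div, le_div_iff₀ hcap]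
    exact mul_le_mul_of_nonneg_left hL (log_nonneg ha)
  calc a = exp (log a) := (exp_log (by linarith)).symm
    _ ≤ exp ((log a / cap) * L) := exp_le_exp.mpr hlog

theorem le_expCost {k α cap L : ℝ} (hk : 0 < k) (hα : 0 ≤ α) (hcap : 0 < cap) (hL : cap ≤ L) :
    α ≤ expCost k α cap L := by
  have hexp : 1 + k * α ≤ exp ((log (1 + k * α) / cap) * L) :=
    le_exp_log_div_mul (by nlinarith) hcap hL
  rw [expCost, one_div, inv_mul_eq_div, le_div_iff₀ hk]
  linarith

/-- If the load L is at least the capacity cap, then x(L) ≥ α; consequently, since every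
benefit b satisfies b ≤ α, the acceptance condition cost < b can never hold. -/
theorem covce_saturated_cost_ge_alpha (n C α cap L : ℝ)
    (hn : 1 ≤ n) (hC : 1 ≤ C) (hα : 1 ≤ α) (hcap : 0 < cap) (hL : cap ≤ L) :
    α ≤ (1 / (n * C)) * (Real.exp ((Real.log (1 + n * C * α) / cap) * L) - 1) ∧
    ∀ b : ℝ, b ≤ α →
      ¬ ((1 / (n * C)) * (Real.exp ((Real.log (1 + n * C * α) / cap) * L) - 1) < b) := by
  have hcost : α ≤ expCost (n * C) α cap L :=
    le_expCost (by nlinarith) (by linarith) hcap hL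
  exact ⟨hcost, fun b hb hlt => (hcost.trans_lt hlt).not_ge hb⟩
end

section
/- In the online routing algorithm, the increase of the primal cost when accepting a request routed on a path p is at most 1 + 2·u_min·[exp(ln(1+n)/u_min) − 1], given that Σ_{e∈p} x(e) < 1 before the update, each edge capacity u(e) ≥ u_min, and |p| ≤ n. -/
/-!
Each edge term factors as `u(e)·(exp(c/u(e)) − 1)·(x(e) + 1/n)` with `c = ln(1+n)`. The first
factor is at most its value at `u_min`, because `u ↦ u·(exp(c/u) − 1) = c·(exp t − 1)/t` at
`t = c/u` is a secant slope of the convex function `exp` through `0`. Summing the second factor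
gives `Σ x(e) + |p|/n < 2`.
-/

open Real Finset

lemma antitoneOn_mul_exp_div_sub_one {c : ℝ} (hc : 0 ≤ c) :
    AntitoneOn (fun u : ℝ => u * (exp (c / u) - 1)) (Set.Ioi 0) := by
  intro v (hv : 0 < v) u (hu : 0 < u) hvu
  rcases hc.eq_or_lt with rfl | hc
  · simp
  have hslope := convexOn_exp.secant_mono (Set.mem_univ 0) (Set.mem_univ (c / u))
    (Set.mem_univ (c / v)) (by positivity) (by positivity)
    (div_le_div_of_nonneg_left hc.le hv hvu)
  have hsecant : ∀ w : ℝ, 0 < w →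
      (exp (c / w) - exp 0) / (c / w - 0) = w * (exp (c / w) - 1) / c := by
    intro w hw
    rw [exp_zero, sub_zero]
    field_simp
  rw [hsecant u hu, hsecant v hv] at hslope
  exact (div_le_div_iff_of_pos_right hc).1 hslope

theorem online_routing_primal_cost_increase_general {E : Type*}
    (p : Finset E) (n u_min : ℝ) (u x : E → ℝ)
    (humin : 1 ≤ u_min) (hcard : (p.card : ℝ) ≤ n)
    (hu : ∀ e ∈ p, u_min ≤ u e) (hx0 : ∀ e ∈ p, 0 ≤ x e)
    (hsum : ∑ e ∈ p, x e < 1) :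
    (∑ e ∈ p, u e * ((x e * Real.exp (Real.log (1 + n) / u e)
        + (1 / n) * (Real.exp (Real.log (1 + n) / u e) - 1)) - x e)) + 1
      ≤ 1 + 2 * u_min * (Real.exp (Real.log (1 + n) / u_min) - 1) := by
  set c := log (1 + n)
  set M := u_min * (exp (c / u_min) - 1)
  have hn : 0 ≤ n := (Nat.cast_nonneg _).trans hcard
  have hc : 0 ≤ c := log_nonneg (by linarith)
  have hM : 0 ≤ M := mul_nonneg (by linarith) (sub_nonneg.2 (one_le_exp (by positivity)))
  have hweight : ∀ e ∈ p, u e * (exp (c / u e) - 1) ≤ M := fun e he =>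
    antitoneOn_mul_exp_div_sub_one hc (Set.mem_Ioi.2 (by linarith))
      (Set.mem_Ioi.2 (by linarith [hu e he])) (hu e he)
  calc (∑ e ∈ p, u e * ((x e * exp (c / u e) + (1 / n) * (exp (c / u e) - 1)) - x e)) + 1
      = (∑ e ∈ p, u e * (exp (c / u e) - 1) * (x e + 1 / n)) + 1 := by
        congr 1; exact sum_congr rfl fun e _ => by ring
    _ ≤ (∑ e ∈ p, M * (x e + 1 / n)) + 1 := by
        gcongr with e he
        · have := hx0 e he; positivity
        · exact hweight e he
    _ = M * (∑ e ∈ p, x e + p.card / n) + 1 := by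
        rw [← mul_sum, sum_add_distrib, sum_const, nsmul_eq_mul, mul_one_div]
    _ ≤ M * (1 + 1) + 1 := by
        gcongr M * ?_ + 1
        exact add_le_add hsum.le (div_le_one_of_le₀ hcard hn)
    _ = 1 + 2 * u_min * (exp (c / u_min) - 1) := by ring

/-- The increase of the primal cost when accepting a request routed on a path p is at
most 1 + 2·u_min·[exp(ln(1+n)/u_min) − 1], given Σ_{e∈p} x(e) < 1, u(e) ≥ u_min and
|p| ≤ n. -/
theorem online_routing_primal_cost_increase {E : Type*} [DecidableEq E]
    (p : Finset E) (n u_min : ℝ) (u x : E → ℝ)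
    (hn : 1 ≤ n) (humin : 1 ≤ u_min) (hcard : (p.card : ℝ) ≤ n)
    (hu : ∀ e ∈ p, u_min ≤ u e) (hx0 : ∀ e ∈ p, 0 ≤ x e)
    (hsum : ∑ e ∈ p, x e < 1) :
    (∑ e ∈ p, u e * ((x e * Real.exp (Real.log (1 + n) / u e)
        + (1 / n) * (Real.exp (Real.log (1 + n) / u e) - 1)) - x e)) + 1
      ≤ 1 + 2 * u_min * (Real.exp (Real.log (1 + n) / u_min) - 1) :=
  online_routing_primal_cost_increase_general p n u_min u x humin hcard hu hx0 hsum
end
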